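/- arXiv:1909.04897 — 3 statements merged into one kernel-verified Lean document; each statement's English description precedes it below -/
import Mathlib

section
/- (Theorem 7.8, case d = 1.) For every integer k ≥ 1 one has Φ(k,1) = 0 in ℚ(λ₀,λ₃); equivalently, the T-equivariant Joyce–Song stable pair invariant P^{JS}_{k+1,1} of the local curve X = Tot_{ℙ¹}(O(−1)⊕O(−1)⊕O) vanishes for all k ≥ 1. -/
noncomputable section

/-- The field `ℚ(λ₀, λ₃)`, realized as the fraction field of the polynomial ring
`ℚ[λ₀, λ₃]` in two variables. -/
abbrev KK : Type := FractionRing (MvPolynomial (Fin 2) ℚ)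

/-- The variable `λ₀` viewed in `ℚ(λ₀, λ₃)`. -/
def lam0 : KK := algebraMap (MvPolynomial (Fin 2) ℚ) KK (MvPolynomial.X 0)

/-- The variable `λ₃` viewed in `ℚ(λ₀, λ₃)`. -/
def lam3 : KK := algebraMap (MvPolynomial (Fin 2) ℚ) KK (MvPolynomial.X 1)

/-- `Φ(k,d) ∈ ℚ(λ₀,λ₃)`: the sum over all tuples `(d₀,…,d_k)` of nonnegative integers with
`d₀+⋯+d_k = d` of
`(1/(d₀!⋯d_k!)) · ∏_{0≤i<j≤k} ((j−i)λ₀ + (d_i−d_j)λ₃)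
  · ∏_{i=0}^{k} ( ∏_{1≤a≤d_i, 1≤b≤k−i} (aλ₃+bλ₀)⁻¹ · ∏_{1≤a≤d_i, 1≤b≤i} (aλ₃−bλ₀)⁻¹ )`. -/
def Phi (k d : ℕ) : KK :=
  ∑ t ∈ Finset.Nat.antidiagonalTuple (k + 1) d,
    (∏ i : Fin (k + 1), (Nat.factorial (t i) : KK))⁻¹ *
    (∏ p ∈ Finset.univ.filter (fun p : Fin (k + 1) × Fin (k + 1) => p.1 < p.2),
        ((((p.2 : ℕ) : KK) - ((p.1 : ℕ) : KK)) * lam0 +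
          ((t p.1 : KK) - (t p.2 : KK)) * lam3)) *
    ∏ i : Fin (k + 1),
      ((∏ a ∈ Finset.Icc 1 (t i), ∏ b ∈ Finset.Icc 1 (k - (i : ℕ)),
          ((a : KK) * lam3 + (b : KK) * lam0)⁻¹) *
       (∏ a ∈ Finset.Icc 1 (t i), ∏ b ∈ Finset.Icc 1 (i : ℕ),
          ((a : KK) * lam3 - (b : KK) * lam0)⁻¹))

/-!
Only the tuples `d = eₘ` contribute to `Φ(k,1)`. With `wᵢ = iλ₀ − dᵢλ₃` the pair factor
`(j−i)λ₀ + (dᵢ−dⱼ)λ₃` is `wⱼ − wᵢ`, so the pair product is the Vandermonde determinant of `w`.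
For `d = eₘ` the inverted factors are exactly the `wⱼ − wₘ`, `j ≠ m`, and splitting them off the
Vandermonde determinant leaves `(−1)ᵐ` times the Vandermonde determinant of `(jλ₀)_{j ≠ m}`.
The alternating sum of these minors is the first-row Laplace expansion of a matrix whose first
two rows are both `(1, …, 1)`, so it vanishes as soon as `k ≥ 1`.
-/

open Finset Matrix

namespace Matrix

variable {R : Type*} [CommRing R] {n : ℕ}

theorem det_vandermonde_eq_prod_mul_det_succ (v : Fin (n + 1) → R) :
    (vandermonde v).det = (∏ j : Fin n, (v j.succ - v 0)) * (vandermonde (v ∘ Fin.succ)).det := by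
  simp [det_vandermonde, Fin.prod_univ_succ]

theorem det_vandermonde_eq_prod_mul_det_succAbove (v : Fin (n + 1) → R) (m : Fin (n + 1)) :
    (vandermonde v).det = (-1) ^ (m : ℕ) * (∏ j : Fin n, (v (m.succAbove j) - v m)) *
      (vandermonde (v ∘ m.succAbove)).det := by
  have hperm : vandermonde (v ∘ m.cycleRange.symm) =
      (vandermonde v).submatrix m.cycleRange.symm id := rfl
  have hsign : (Equiv.Perm.sign m.cycleRange.symm : R) = (-1) ^ (m : ℕ) := by
    simp [Equiv.Perm.sign_symm, Fin.sign_cycleRange]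
  have key := det_vandermonde_eq_prod_mul_det_succ (v ∘ m.cycleRange.symm)
  rw [hperm, det_permute, hsign] at key
  simp only [Function.comp_def, Fin.cycleRange_symm_zero, Fin.cycleRange_symm_succ] at key
  rw [mul_assoc, Function.comp_def, ← key, ← mul_assoc, ← pow_add, ← two_mul, pow_mul,
    neg_one_sq, one_pow, one_mul]

theorem sum_neg_one_pow_mul_det_vandermonde_succAbove (v : Fin (n + 2) → R) :
    ∑ m : Fin (n + 2), (-1) ^ (m : ℕ) * (vandermonde (v ∘ m.succAbove)).det = 0 := by
  set M : Matrix (Fin (n + 2)) (Fin (n + 2)) R := .of (Fin.cons 1 fun i j => v j ^ (i : ℕ))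
  have hM : M.det = 0 := det_zero_of_row_eq (i := 0) (j := 1) Fin.zero_ne_one (by ext; simp [M])
  rw [det_succ_row_zero] at hM
  convert hM using 2 with m
  have : M.submatrix Fin.succ m.succAbove = (vandermonde (v ∘ m.succAbove))ᵀ := by ext; simp [M]
  simp [this, M]

end Matrix

theorem Finset.prod_filter_lt_eq_prod_prod_Ioi {ι M : Type*} [CommMonoid M] [LinearOrder ι]
    [Fintype ι] [LocallyFiniteOrderTop ι] (f : ι → ι → M) :
    ∏ p ∈ univ.filter (fun p : ι × ι => p.1 < p.2), f p.1 p.2 = ∏ i, ∏ j ∈ Ioi i, f i j :=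
  prod_finset_product' _ _ _ (by simp)

theorem Fin.prod_succAbove_sub_eq_prod_Icc {M : Type*} [CommMonoid M] {k : ℕ} (f : ℤ → M)
    (m : Fin (k + 1)) :
    ∏ j : Fin k, f ((m.succAbove j : ℕ) - m) =
      (∏ b ∈ Icc 1 (k - m), f b) * ∏ b ∈ Icc 1 (m : ℕ), f (-b) := by
  rw [← prod_filter_not_mul_prod_filter univ (fun j : Fin k => j.castSucc < m)]
  have hm := m.isLt
  congr 1
  · refine prod_bij' (fun j _ => j + 1 - m) (fun b hb => ⟨m + b - 1, by simp only [mem_Icc] at hb; omega⟩)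
      ?_ ?_ ?_ ?_ fun j hj => ?_
    any_goals intro _ h; simp only [mem_filter, mem_univ, true_and, mem_Icc, Fin.ext_iff,
      Fin.lt_def, not_lt, Fin.val_castSucc] at h ⊢; omega
    rw [Fin.succAbove_of_le_castSucc _ _ (by simpa using hj)]
    simp only [mem_filter, mem_univ, true_and, not_lt, Fin.le_def, Fin.val_castSucc] at hj
    congr 1
    simp only [Fin.val_succ]
    omega
  · refine prod_bij' (fun j _ => m - j) (fun b hb => ⟨m - b, by simp only [mem_Icc] at hb; omega⟩)
      ?_ ?_ ?_ ?_ fun j hj => ?_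
    any_goals intro _ h; simp only [mem_filter, mem_univ, true_and, mem_Icc, Fin.ext_iff,
      Fin.lt_def, Fin.val_castSucc] at h ⊢; omega
    rw [Fin.succAbove_of_castSucc_lt _ _ (by simpa using hj)]
    simp only [mem_filter, mem_univ, true_and, Fin.lt_def, Fin.val_castSucc] at hj
    congr 1
    simp only [Fin.val_castSucc]
    omega

theorem Pi.single_left_injective {ι M : Type*} [DecidableEq ι] [Zero M] {b : M} (hb : b ≠ 0) :
    Function.Injective fun i : ι => Pi.single i b := fun i j h => by
  simpa [Pi.single_apply, hb] using congr_fun h i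

theorem Finset.Nat.antidiagonalTuple_one_right (n : ℕ) :
    Nat.antidiagonalTuple n 1 =
      univ.map ⟨fun i => Pi.single i 1, Pi.single_left_injective one_ne_zero⟩ := by
  ext t
  have := Finsupp.sum_eq_one_iff (Finsupp.equivFunOnFinite.symm t)
  simp only [Finsupp.sum_fintype, implies_true, Equiv.symm_apply_eq,
    Finsupp.equivFunOnFinite_single, Finsupp.coe_equivFunOnFinite_symm] at this
  simp [Nat.mem_antidiagonalTuple, this, eq_comm]

theorem lam3_add_intCast_mul_lam0_ne_zero (c : ℤ) : lam3 + c * lam0 ≠ 0 := by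
  have : lam3 + c * lam0 = algebraMap (MvPolynomial (Fin 2) ℚ) KK
      (MvPolynomial.X 1 + MvPolynomial.C (c : ℚ) * MvPolynomial.X 0) := by
    simp [lam0, lam3]
  rw [this, ne_eq, IsFractionRing.to_map_eq_zero_iff]
  intro h
  simpa using congr_arg (MvPolynomial.eval ![0, 1]) h

def tupleWeight {n : ℕ} (t : Fin n → ℕ) (i : Fin n) : KK := (i : ℕ) * lam0 - t i * lam3

theorem prod_pairFactor_eq_det_vandermonde {n : ℕ} (t : Fin n → ℕ) :
    ∏ p ∈ univ.filter (fun p : Fin n × Fin n => p.1 < p.2),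
        ((((p.2 : ℕ) : KK) - ((p.1 : ℕ) : KK)) * lam0 + ((t p.1 : KK) - (t p.2 : KK)) * lam3) =
      (vandermonde (tupleWeight t)).det := by
  rw [det_vandermonde, ← prod_filter_lt_eq_prod_prod_Ioi]
  simp only [tupleWeight]
  congr! 1
  ring

def phiSummand (k : ℕ) (t : Fin (k + 1) → ℕ) : KK :=
  (∏ i : Fin (k + 1), (Nat.factorial (t i) : KK))⁻¹ *
    (∏ p ∈ univ.filter (fun p : Fin (k + 1) × Fin (k + 1) => p.1 < p.2),
        ((((p.2 : ℕ) : KK) - ((p.1 : ℕ) : KK)) * lam0 + ((t p.1 : KK) - (t p.2 : KK)) * lam3)) *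
    ∏ i : Fin (k + 1),
      ((∏ a ∈ Icc 1 (t i), ∏ b ∈ Icc 1 (k - (i : ℕ)), ((a : KK) * lam3 + (b : KK) * lam0)⁻¹) *
       (∏ a ∈ Icc 1 (t i), ∏ b ∈ Icc 1 (i : ℕ), ((a : KK) * lam3 - (b : KK) * lam0)⁻¹))

theorem Phi_eq_sum_phiSummand (k d : ℕ) :
    Phi k d = ∑ t ∈ Nat.antidiagonalTuple (k + 1) d, phiSummand k t := rfl

theorem phiSummand_single {k : ℕ} (m : Fin (k + 1)) :
    phiSummand k (Pi.single m 1) =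
      (-1) ^ (m : ℕ) * (vandermonde fun i => ((m.succAbove i : ℕ) : KK) * lam0).det := by
  set w := tupleWeight (Pi.single m 1)
  have hw_sub (j : Fin k) :
      w (m.succAbove j) - w m = lam3 + (((m.succAbove j : ℕ) - m : ℤ) : KK) * lam0 := by
    simp only [w, tupleWeight, Pi.single_eq_same, Pi.single_eq_of_ne (m.succAbove_ne j)]
    push_cast
    ring
  have hw_comp : w ∘ m.succAbove = fun i => ((m.succAbove i : ℕ) : KK) * lam0 := by
    ext j; simp [w, tupleWeight]
  have hfact : ∏ i, (((Pi.single m 1 : Fin (k + 1) → ℕ) i).factorial : KK) = 1 :=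
    prod_eq_one fun i _ => by rcases eq_or_ne i m with rfl | h <;> simp [*]
  have hden : ∏ i : Fin (k + 1),
      ((∏ a ∈ Icc 1 ((Pi.single m 1 : Fin (k + 1) → ℕ) i), ∏ b ∈ Icc 1 (k - (i : ℕ)),
          ((a : KK) * lam3 + (b : KK) * lam0)⁻¹) *
       (∏ a ∈ Icc 1 ((Pi.single m 1 : Fin (k + 1) → ℕ) i), ∏ b ∈ Icc 1 (i : ℕ),
          ((a : KK) * lam3 - (b : KK) * lam0)⁻¹)) =
      (∏ j : Fin k, (w (m.succAbove j) - w m))⁻¹ := by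
    rw [Fintype.prod_eq_single m fun i hi => by simp [Pi.single_eq_of_ne hi]]
    simp only [hw_sub, ← prod_inv_distrib]
    rw [Fin.prod_succAbove_sub_eq_prod_Icc (fun c : ℤ => (lam3 + c * lam0)⁻¹)]
    simp [sub_eq_add_neg]
  have hD : ∏ j : Fin k, (w (m.succAbove j) - w m) ≠ 0 :=
    prod_ne_zero_iff.2 fun j _ => hw_sub j ▸ lam3_add_intCast_mul_lam0_ne_zero _
  rw [phiSummand, hfact, inv_one, one_mul, prod_pairFactor_eq_det_vandermonde, hden,
    det_vandermonde_eq_prod_mul_det_succAbove _ m, hw_comp, mul_right_comm]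
  exact congrArg (· * _) (mul_inv_cancel_right₀ hD _)

/-- Theorem 7.8, case `d = 1`: `Φ(k,1) = 0` for every `k ≥ 1`; equivalently,
the `T`-equivariant Joyce–Song stable pair invariant `P^{JS}_{k+1,1}` of
`Tot_{ℙ¹}(O(−1)⊕O(−1)⊕O)` vanishes. -/
theorem stmt_2 (k : ℕ) (hk : 1 ≤ k) : Phi k 1 = 0 := by
  obtain ⟨n, rfl⟩ := Nat.exists_eq_add_of_le' hk
  rw [Phi_eq_sum_phiSummand, Nat.antidiagonalTuple_one_right, sum_map]
  simp only [Function.Embedding.coeFn_mk, phiSummand_single]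
  exact sum_neg_one_pow_mul_det_vandermonde_succAbove fun i => ((i : ℕ) : KK) * lam0

end
end

section
/- (Lemma 7.3 of the paper: the chosen class is a square root.) Let k ≥ 0 be an integer and (d₀,…,d_k) a tuple of nonnegative integers. In the group algebra R = ℤ[ℤ×ℤ], writing t^{(a,b)} for the basis element corresponding to (a,b) ∈ ℤ×ℤ, define A = Σ_{i=0}^{k} ( Σ_{j=−(k−i)}^{i} t^{(j,0)} ) · ( Σ_{j'=0}^{d_i−1} t^{(0,−j')} ), B = Σ_{0≤i<j≤k} t^{(j−i,0)} · ( 1 − t^{(0,d_i)} − t^{(0,−d_j)} + t^{(0,d_i−d_j)} ), C = Σ_{i=0}^{k} ( 1 − t^{(0,d_i)} ), and D = Σ_{i=0}^{k} Σ_{j=0}^{k} t^{(j−i,0)} · ( 2 − t^{(0,1)} − t^{(0,−1)} ) · ( Σ_{s=0}^{d_i−1} t^{(0,s)} ) · ( Σ_{r=0}^{d_j−1} t^{(0,−r)} ). Let ι : R → R be the ring involution induced by the group automorphism (a,b) ↦ (−a,−b) of ℤ×ℤ. Then the element S := −A + B + C satisfies S + ι(S) = D − A − ι(A). -/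
/-!
Write `x = t^{(1,0)}` and `y = t^{(0,1)}`. The telescoping identity
`(1 - y) (1 + y + ⋯ + y^{d-1}) = 1 - y^d`, its analogue for `y⁻¹`, and the factorisation
`2 - y - y⁻¹ = (1 - y)(1 - y⁻¹)` turn `D` into `Σ_{i,j} x^{j-i} (1 - y^{d_i}) (1 - y^{-d_j})`.
Splitting this double sum into the parts `i < j`, `i = j` and `i > j` gives `B`, `C + ι(C)` and
`ι(B)` respectively, so `D = B + ι(B) + C + ι(C)`, and the identity follows after the `A`-terms
cancel.
-/

noncomputable section

/-- The group algebra `R = ℤ[ℤ×ℤ]`. -/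
abbrev RR : Type := AddMonoidAlgebra ℤ (ℤ × ℤ)

/-- The basis element `t^{(a,b)}` of `R = ℤ[ℤ×ℤ]` corresponding to `(a,b) ∈ ℤ×ℤ`. -/
def tm (w : ℤ × ℤ) : RR := AddMonoidAlgebra.single w 1

/-- The ring involution `ι : R → R` induced by the group automorphism
`(a,b) ↦ (−a,−b)` of `ℤ×ℤ`. -/
def iota : RR →+* RR :=
  AddMonoidAlgebra.mapDomainRingHom ℤ
    (AddMonoidHom.mk' (fun w : ℤ × ℤ => -w) fun a b => neg_add a b)

/-- `A = Σ_{i=0}^{k} ( Σ_{j=−(k−i)}^{i} t^{(j,0)} ) · ( Σ_{j'=0}^{d_i−1} t^{(0,−j')} )`. -/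
def Achar (k : ℕ) (d : Fin (k + 1) → ℕ) : RR :=
  ∑ i : Fin (k + 1),
    (∑ j ∈ Finset.Icc (-((k : ℤ) - (i : ℕ))) ((i : ℕ) : ℤ), tm (j, 0)) *
      (∑ j' ∈ Finset.range (d i), tm (0, -(j' : ℤ)))

/-- `B = Σ_{0≤i<j≤k} t^{(j−i,0)} · ( 1 − t^{(0,d_i)} − t^{(0,−d_j)} + t^{(0,d_i−d_j)} )`. -/
def Bchar (k : ℕ) (d : Fin (k + 1) → ℕ) : RR :=
  ∑ p ∈ Finset.univ.filter (fun p : Fin (k + 1) × Fin (k + 1) => p.1 < p.2),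
    tm ((((p.2 : ℕ) : ℤ) - ((p.1 : ℕ) : ℤ)), 0) *
      (1 - tm (0, (d p.1 : ℤ)) - tm (0, -(d p.2 : ℤ)) + tm (0, (d p.1 : ℤ) - (d p.2 : ℤ)))

/-- `C = Σ_{i=0}^{k} ( 1 − t^{(0,d_i)} )`. -/
def Cchar (k : ℕ) (d : Fin (k + 1) → ℕ) : RR :=
  ∑ i : Fin (k + 1), (1 - tm (0, (d i : ℤ)))

/-- `D = Σ_{i=0}^{k} Σ_{j=0}^{k} t^{(j−i,0)} · (2 − t^{(0,1)} − t^{(0,−1)})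
      · ( Σ_{s=0}^{d_i−1} t^{(0,s)} ) · ( Σ_{r=0}^{d_j−1} t^{(0,−r)} )`. -/
def Dchar (k : ℕ) (d : Fin (k + 1) → ℕ) : RR :=
  ∑ i : Fin (k + 1), ∑ j : Fin (k + 1),
    tm ((((j : ℕ) : ℤ) - ((i : ℕ) : ℤ)), 0) * (2 - tm (0, 1) - tm (0, -1)) *
      (∑ s ∈ Finset.range (d i), tm (0, (s : ℤ))) *
      (∑ r ∈ Finset.range (d j), tm (0, -(r : ℤ)))

lemma tm_zero : tm 0 = 1 := rfl

lemma tm_add (a b : ℤ × ℤ) : tm (a + b) = tm a * tm b := by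
  simp [tm, AddMonoidAlgebra.single_mul_single]

lemma tm_nsmul (n : ℕ) (w : ℤ × ℤ) : tm (n • w) = tm w ^ n := by
  simp [tm, AddMonoidAlgebra.single_pow]

lemma iota_tm (w : ℤ × ℤ) : iota (tm w) = tm (-w) := by
  simp [iota, tm, AddMonoidAlgebra.mapDomainRingHom]

lemma one_sub_tm_mul_sum_range (w : ℤ × ℤ) (n : ℕ) :
    (1 - tm w) * ∑ s ∈ Finset.range n, tm (s • w) = 1 - tm (n • w) := by
  simp only [tm_nsmul, mul_neg_geom_sum]

lemma two_sub_tm_sub_tm_neg (w : ℤ × ℤ) :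
    (2 : RR) - tm w - tm (-w) = (1 - tm w) * (1 - tm (-w)) := by
  have h : tm w * tm (-w) = 1 := by rw [← tm_add, add_neg_cancel, tm_zero]
  linear_combination -h

theorem Finset.sum_sum_eq_sum_lt_add_sum_diag_add_sum_gt {ι M : Type*} [Fintype ι]
    [LinearOrder ι] [AddCommMonoid M] (g : ι → ι → M) :
    ∑ i, ∑ j, g i j =
      ∑ p ∈ univ.filter (fun p : ι × ι => p.1 < p.2), g p.1 p.2 + ∑ i, g i i +
        ∑ p ∈ univ.filter (fun p : ι × ι => p.1 < p.2), g p.2 p.1 := by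
  have hdiag : ∑ p ∈ univ.filter (fun p : ι × ι => p.1 = p.2), g p.1 p.2 = ∑ i, g i i :=
    sum_nbij' Prod.fst (fun i => (i, i)) (by simp) (by simp) (by simp +contextual [Prod.ext_iff])
      (by simp) (by simp +contextual)
  have hgt : ∑ p ∈ univ.filter (fun p : ι × ι => p.2 < p.1), g p.1 p.2 =
      ∑ p ∈ univ.filter (fun p : ι × ι => p.1 < p.2), g p.2 p.1 :=
    sum_equiv (Equiv.prodComm ι ι) (by simp) (by simp)
  have hge : univ.filter (fun p : ι × ι => ¬p.1 < p.2) =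
      univ.filter (fun p : ι × ι => p.1 = p.2) ∪ univ.filter (fun p : ι × ι => p.2 < p.1) := by
    ext p; simp [le_iff_eq_or_lt, eq_comm]
  have hdisj : Disjoint (univ.filter (fun p : ι × ι => p.1 = p.2))
      (univ.filter (fun p : ι × ι => p.2 < p.1)) :=
    disjoint_filter.2 fun p _ h => h.symm.not_lt
  rw [← Fintype.sum_prod_type', ← sum_filter_add_sum_filter_not univ (fun p : ι × ι => p.1 < p.2),
    hge, sum_union hdisj, hdiag, hgt, add_assoc]

def Dsummand {n : ℕ} (d : Fin n → ℕ) (i j : Fin n) : RR :=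
  tm ((((j : ℕ) : ℤ) - ((i : ℕ) : ℤ)), 0) *
    ((1 - tm (0, (d i : ℤ))) * (1 - tm (0, -(d j : ℤ))))

lemma Dsummand_eq {n : ℕ} (d : Fin n → ℕ) (i j : Fin n) :
    Dsummand d i j = tm ((((j : ℕ) : ℤ) - ((i : ℕ) : ℤ)), 0) *
      (1 - tm (0, (d i : ℤ)) - tm (0, -(d j : ℤ)) + tm (0, (d i : ℤ) - (d j : ℤ))) := by
  have h : tm (0, (d i : ℤ)) * tm (0, -(d j : ℤ)) = tm (0, (d i : ℤ) - (d j : ℤ)) := by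
    rw [← tm_add, Prod.mk_add_mk, zero_add, ← sub_eq_add_neg]
  rw [Dsummand, ← h]
  ring

lemma Dchar_eq_sum_Dsummand (k : ℕ) (d : Fin (k + 1) → ℕ) :
    Dchar k d = ∑ i, ∑ j, Dsummand d i j := by
  have telescope_pos (m : ℕ) :
      (1 - tm (0, 1)) * ∑ s ∈ Finset.range m, tm (0, (s : ℤ)) = 1 - tm (0, (m : ℤ)) := by
    simpa using one_sub_tm_mul_sum_range (0, 1) m
  have telescope_neg (m : ℕ) :
      (1 - tm (0, -1)) * ∑ r ∈ Finset.range m, tm (0, -(r : ℤ)) = 1 - tm (0, -(m : ℤ)) := by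
    simpa using one_sub_tm_mul_sum_range (0, -1) m
  have factor : (2 : RR) - tm (0, 1) - tm (0, -1) = (1 - tm (0, 1)) * (1 - tm (0, -1)) := by
    simpa using two_sub_tm_sub_tm_neg (0, 1)
  refine Finset.sum_congr rfl fun i _ => Finset.sum_congr rfl fun j _ => ?_
  rw [Dsummand, factor, ← telescope_pos, ← telescope_neg]
  ring

lemma Bchar_eq_sum_Dsummand (k : ℕ) (d : Fin (k + 1) → ℕ) :
    Bchar k d = ∑ p ∈ Finset.univ.filter (fun p : Fin (k + 1) × Fin (k + 1) => p.1 < p.2),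
      Dsummand d p.1 p.2 :=
  Finset.sum_congr rfl fun p _ => (Dsummand_eq d p.1 p.2).symm

lemma iota_Bchar_eq_sum_Dsummand (k : ℕ) (d : Fin (k + 1) → ℕ) :
    iota (Bchar k d) =
      ∑ p ∈ Finset.univ.filter (fun p : Fin (k + 1) × Fin (k + 1) => p.1 < p.2),
        Dsummand d p.2 p.1 := by
  rw [Bchar, map_sum]
  refine Finset.sum_congr rfl fun p _ => ?_
  simp only [Dsummand_eq, map_mul, map_add, map_sub, map_one, iota_tm, Prod.neg_mk, neg_zero,
    neg_neg, neg_sub]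
  ring

lemma Cchar_add_iota_Cchar (k : ℕ) (d : Fin (k + 1) → ℕ) :
    Cchar k d + iota (Cchar k d) = ∑ i, Dsummand d i i := by
  rw [Cchar, map_sum, ← Finset.sum_add_distrib]
  refine Finset.sum_congr rfl fun i _ => ?_
  simp only [Dsummand_eq, map_sub, map_one, iota_tm, Prod.neg_mk, neg_zero, sub_self,
    Prod.mk_zero_zero, tm_zero]
  ring

/-- Lemma 7.3: the element `S = −A + B + C` of `ℤ[ℤ×ℤ]` satisfies
`S + ι(S) = D − A − ι(A)`, i.e. it is a square root of the character
`χ_X(I,I)₀` with respect to the duality involution `ι`. -/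
theorem stmt_6 (k : ℕ) (d : Fin (k + 1) → ℕ) :
    (-Achar k d + Bchar k d + Cchar k d) + iota (-Achar k d + Bchar k d + Cchar k d) =
      Dchar k d - Achar k d - iota (Achar k d) := by
  have hD : Bchar k d + (Cchar k d + iota (Cchar k d)) + iota (Bchar k d) = Dchar k d := by
    rw [iota_Bchar_eq_sum_Dsummand, Bchar_eq_sum_Dsummand, Cchar_add_iota_Cchar,
      Dchar_eq_sum_Dsummand, Finset.sum_sum_eq_sum_lt_add_sum_diag_add_sum_gt]
  rw [map_add, map_add, map_neg]
  linear_combination hD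

end
end

section
/- (Proposition of Section 7.1: Joyce–Song invariants of a local curve in degree one.) Let l₁, l₂, l₃ be integers and n ≥ 1 an integer. Work in the field ℚ(λ₀,λ₁,λ₂,λ₃), the fraction field of the polynomial ring ℚ[λ₀,λ₁,λ₂,λ₃]. For nonnegative integers a, b with a + b = n − 1, define V(a,b) : ℤ⁴ → ℤ to be the finitely supported function V(a,b) = −(l₁+1)·δ_{(0,1,0,0)} − (l₂+1)·δ_{(0,0,1,0)} − (l₃+1)·δ_{(0,0,0,1)} − Σ_{j=−b, j≠0}^{a} δ_{(j,0,0,0)}, where δ_w is the indicator function of w ∈ ℤ⁴. Then V(a,b)(0,0,0,0) = 0, and Σ_{a,b ≥ 0, a+b = n−1} e(V(a,b)) equals λ₁^{−(l₁+1)} λ₂^{−(l₂+1)} λ₃^{−(l₃+1)} if n = 1, and equals 0 if n ≥ 2. -/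
/-! The Euler class is multiplicative on characters vanishing at `0`, so `e(V(a,b))` is
`λ₁^{-(l₁+1)} λ₂^{-(l₂+1)} λ₃^{-(l₃+1)}` times
`∏_{j ∈ [-b,a] \ {0}} (jλ₀)⁻¹ = (-1)^b / (a! b! λ₀^{a+b})`. Summing over `a + b = m` leaves
`λ₀^{-m} / m! · Σ_{a+b=m} (-1)^b C(m,a) = λ₀^{-m} (1 - 1)^m / m!`, which vanishes unless `m = 0`. -/

noncomputable section

/-- The field `ℚ(λ₀,λ₁,λ₂,λ₃)`, realized as the fraction field of `ℚ[λ₀,λ₁,λ₂,λ₃]`. -/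
abbrev K4 : Type := FractionRing (MvPolynomial (Fin 4) ℚ)

/-- The variables `λ₀, λ₁, λ₂, λ₃` viewed in `ℚ(λ₀,λ₁,λ₂,λ₃)`. -/
def lam (i : Fin 4) : K4 := algebraMap (MvPolynomial (Fin 4) ℚ) K4 (MvPolynomial.X i)

/-- The equivariant Euler class of a finitely supported function `c : ℤ⁴ → ℤ`:
`e(c) = ∏_{w ∈ supp c} (w₀λ₀ + w₁λ₁ + w₂λ₂ + w₃λ₃)^{c(w)}`, with integer
(possibly negative) powers. -/
def eul4 (c : (Fin 4 → ℤ) →₀ ℤ) : K4 :=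
  c.prod fun w n => (∑ i : Fin 4, (w i : K4) * lam i) ^ n

/-- The character `V(a,b) = −(l₁+1)δ_{(0,1,0,0)} − (l₂+1)δ_{(0,0,1,0)} − (l₃+1)δ_{(0,0,0,1)}
− Σ_{j=−b, j≠0}^{a} δ_{(j,0,0,0)}` of the chosen square root `χ_X(I,I)₀^{1/2}` at the
torus-fixed Joyce–Song stable pair indexed by `(a,b)`. -/
def V (l1 l2 l3 : ℤ) (a b : ℕ) : (Fin 4 → ℤ) →₀ ℤ :=
  Finsupp.single ![0, 1, 0, 0] (-(l1 + 1)) + Finsupp.single ![0, 0, 1, 0] (-(l2 + 1)) +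
    Finsupp.single ![0, 0, 0, 1] (-(l3 + 1)) -
    ∑ j ∈ (Finset.Icc (-(b : ℤ)) (a : ℤ)).erase 0, Finsupp.single ![j, 0, 0, 0] 1

open Finset
open scoped Nat

def charWeight (w : Fin 4 → ℤ) : K4 := ∑ i, (w i : K4) * lam i

lemma charWeight_ne_zero {w : Fin 4 → ℤ} (hw : w ≠ 0) : charWeight w ≠ 0 := by
  obtain ⟨i, hi⟩ := Function.ne_iff.mp hw
  have hpoly : charWeight w = algebraMap (MvPolynomial (Fin 4) ℚ) K4
      (∑ j, (w j : MvPolynomial (Fin 4) ℚ) * .X j) := by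
    simp [charWeight, lam]
  rw [hpoly, ne_eq, IsFractionRing.to_map_eq_zero_iff]
  intro h
  exact hi (by simpa [Pi.single_apply] using congrArg (MvPolynomial.eval (Pi.single i 1)) h)

lemma eul4_single (w : Fin 4 → ℤ) (m : ℤ) : eul4 (Finsupp.single w m) = charWeight w ^ m :=
  Finsupp.prod_single_index (zpow_zero _)

lemma eul4_neg (c : (Fin 4 → ℤ) →₀ ℤ) : eul4 (-c) = (eul4 c)⁻¹ := by
  simp [eul4, Finsupp.prod, zpow_neg]

lemma eul4_add {c d : (Fin 4 → ℤ) →₀ ℤ} (hc : c 0 = 0) (hd : d 0 = 0) :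
    eul4 (c + d) = eul4 c * eul4 d := by
  refine Finsupp.prod_add_index (fun _ _ => zpow_zero _) fun w hw m k =>
    zpow_add₀ (charWeight_ne_zero ?_) m k
  rintro rfl
  simp [hc, hd] at hw

lemma eul4_sum {ι : Type*} (s : Finset ι) (g : ι → (Fin 4 → ℤ) →₀ ℤ)
    (h : ∀ i ∈ s, g i 0 = 0) :
    eul4 (∑ i ∈ s, g i) = ∏ i ∈ s, eul4 (g i) := by
  classical
  induction s using Finset.induction_on with
  | empty => simp [eul4]
  | insert a s ha ih =>
    have hs : ∀ i ∈ s, g i 0 = 0 := fun i hi => h i (mem_insert_of_mem hi)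
    rw [sum_insert ha, prod_insert ha, eul4_add (h a (mem_insert_self a s)), ih hs]
    rw [Finsupp.finsetSum_apply]
    exact sum_eq_zero hs

lemma prod_Icc_one_eq_factorial (a : ℕ) : ∏ j ∈ Icc (1 : ℤ) a, j = a ! := by
  rw [Int.Icc_eq_finset_map, prod_map]
  simp [add_comm, ← prod_range_add_one_eq_factorial]

lemma prod_Icc_neg_eq_neg_one_pow_mul_factorial (b : ℕ) :
    ∏ j ∈ Icc (-(b : ℤ)) (-1), j = (-1) ^ b * b ! := by
  have : Icc (-(b : ℤ)) (-1) = (Icc 1 (b : ℤ)).map (Equiv.neg ℤ).toEmbedding := by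
    ext x; simp; omega
  rw [this, prod_map]
  simpa [prod_Icc_one_eq_factorial] using prod_neg (s := Icc (1 : ℤ) b) id

lemma Icc_erase_zero (a b : ℕ) :
    (Icc (-(b : ℤ)) a).erase 0 = Icc (-(b : ℤ)) (-1) ∪ Icc 1 (a : ℤ) := by
  ext x; simp; omega

lemma prod_Icc_erase_zero (a b : ℕ) :
    ∏ j ∈ (Icc (-(b : ℤ)) a).erase 0, j = (-1) ^ b * a ! * b ! := by
  rw [Icc_erase_zero, prod_union (disjoint_left.mpr fun x hx hx' => by simp at hx hx'; omega),
    prod_Icc_neg_eq_neg_one_pow_mul_factorial, prod_Icc_one_eq_factorial]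
  ring

lemma card_Icc_erase_zero (a b : ℕ) : #((Icc (-(b : ℤ)) a).erase 0) = a + b := by
  rw [card_erase_of_mem (by simp), Int.card_Icc]
  omega

lemma V_apply_zero (l1 l2 l3 : ℤ) (a b : ℕ) : V l1 l2 l3 a b 0 = 0 := by
  simp [V, Finsupp.single_apply]

lemma eul4_sum_single_Icc_erase_zero (a b : ℕ) :
    eul4 (∑ j ∈ (Icc (-(b : ℤ)) a).erase 0, Finsupp.single ![j, 0, 0, 0] 1) =
      (-1) ^ b * a ! * b ! * lam 0 ^ (a + b) := by
  have hweight (j : ℤ) : charWeight ![j, 0, 0, 0] = j * lam 0 := by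
    simp [charWeight, Fin.sum_univ_four]
  rw [eul4_sum _ _ fun j hj => Finsupp.single_eq_of_ne' (by simpa using ne_of_mem_erase hj)]
  simp only [eul4_single, zpow_one, hweight, prod_mul_distrib, prod_const, card_Icc_erase_zero]
  rw [← Int.cast_prod, prod_Icc_erase_zero]
  push_cast
  ring

lemma eul4_V (l1 l2 l3 : ℤ) (a b : ℕ) :
    eul4 (V l1 l2 l3 a b) = lam 1 ^ (-(l1 + 1)) * lam 2 ^ (-(l2 + 1)) * lam 3 ^ (-(l3 + 1)) *
      ((-1) ^ b * a ! * b ! * lam 0 ^ (a + b))⁻¹ := by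
  rw [V, sub_eq_add_neg, eul4_add (by simp) (by simp [Finsupp.single_apply]),
    eul4_add (by simp) (by simp), eul4_add (by simp) (by simp), eul4_neg,
    eul4_sum_single_Icc_erase_zero, eul4_single, eul4_single, eul4_single]
  simp [charWeight, Fin.sum_univ_four]

lemma sum_antidiagonal_inv_neg_one_pow_mul_factorial_mul_factorial {F : Type*} [Field F]
    [CharZero F] {m : ℕ} (hm : m ≠ 0) :
    ∑ p ∈ antidiagonal m, ((-1 : F) ^ p.2 * p.1 ! * p.2 !)⁻¹ = 0 := by
  have hterm : ∀ p ∈ antidiagonal m, ((-1 : F) ^ p.2 * p.1 ! * p.2 !)⁻¹ =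
      (m ! : F)⁻¹ * (m.choose p.1 • (1 ^ p.1 * (-1) ^ p.2)) := by
    rintro ⟨k, l⟩ hkl
    obtain rfl : k + l = m := HasAntidiagonal.mem_antidiagonal.mp hkl
    rw [nsmul_eq_mul, one_pow, one_mul, Nat.cast_add_choose, mul_inv, mul_inv, ← inv_pow,
      inv_neg_one]
    have : ((k + l)! : F) ≠ 0 := Nat.cast_ne_zero.mpr (Nat.factorial_ne_zero _)
    field_simp
  rw [sum_congr rfl hterm, ← mul_sum, ← (Commute.one_left _).add_pow', add_neg_cancel,
    zero_pow hm, mul_zero]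

/-- Proposition of Section 7.1: for integers `l₁, l₂, l₃` and `n ≥ 1`, each character
`V(a,b)` with `a + b = n − 1` vanishes at `0 ∈ ℤ⁴`, and the `T`-equivariant degree-one
Joyce–Song stable pair invariant `P^{JS}_{n,1} = Σ_{a+b=n−1} e(V(a,b))` equals
`λ₁^{−(l₁+1)} λ₂^{−(l₂+1)} λ₃^{−(l₃+1)}` if `n = 1`, and `0` if `n ≥ 2`. -/
theorem stmt_7 (l1 l2 l3 : ℤ) (n : ℕ) (hn : 1 ≤ n) :
    (∀ a b : ℕ, a + b = n - 1 → V l1 l2 l3 a b (0 : Fin 4 → ℤ) = 0) ∧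
    (∑ p ∈ Finset.HasAntidiagonal.antidiagonal (n - 1), eul4 (V l1 l2 l3 p.1 p.2)) =
      if n = 1 then
        lam 1 ^ (-(l1 + 1)) * lam 2 ^ (-(l2 + 1)) * lam 3 ^ (-(l3 + 1))
      else 0 := by
  refine ⟨fun a b _ => V_apply_zero l1 l2 l3 a b, ?_⟩
  have hfactor : ∀ p ∈ antidiagonal (n - 1),
      ((-1 : K4) ^ p.2 * p.1 ! * p.2 ! * lam 0 ^ (p.1 + p.2))⁻¹ =
        ((-1 : K4) ^ p.2 * p.1 ! * p.2 !)⁻¹ * (lam 0 ^ (n - 1))⁻¹ := by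
    intro p hp
    rw [HasAntidiagonal.mem_antidiagonal.mp hp, mul_inv]
  simp_rw [eul4_V]
  rw [← mul_sum, sum_congr rfl hfactor, ← sum_mul]
  split_ifs with hn1
  · simp [hn1]
  · rw [sum_antidiagonal_inv_neg_one_pow_mul_factorial_mul_factorial (by omega), zero_mul,
      mul_zero]
end
end
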